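/- Let g be a polynomial in ℝ[x₁,…,x_d] and let β ∈ ℕ^d be a multi-index. If the iterated finite difference Δ^β g is the zero polynomial, where Δ_k g = τ_{e_k} g − g is the forward difference with increment 1 in the k-th variable and Δ^β = Δ₁^{β₁}⋯Δ_d^{β_d}, then the iterated partial derivative ∂^β g is the zero polynomial. -/

import Mathlib

open MvPolynomial

/-- The forward partial difference operator in the `k`-th variable with
increment `1`: `Δ_k g = τ_{e_k} g - g`. -/
noncomputable def fdiff {d : ℕ} (k : Fin d) :
    Module.End ℝ (MvPolynomial (Fin d) ℝ) :=
  (bind₁ fun i : Fin d =>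
      (X i : MvPolynomial (Fin d) ℝ) +
        (C ((Pi.single k 1 : Fin d → ℝ) i) : MvPolynomial (Fin d) ℝ)).toLinearMap -
    LinearMap.id

/-- The iterated difference operator `Δ^β = Δ₁^{β₁} ⋯ Δ_d^{β_d}`. -/
noncomputable def iterFDiff {d : ℕ} (β : Fin d → ℕ) :
    Module.End ℝ (MvPolynomial (Fin d) ℝ) :=
  (List.ofFn fun k : Fin d => fdiff k ^ (β k)).prod

/-- The iterated formal partial derivative `∂^β`. -/
noncomputable def iterPDeriv {d : ℕ} (β : Fin d → ℕ) :
    Module.End ℝ (MvPolynomial (Fin d) ℝ) :=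
  (List.ofFn fun i : Fin d =>
    ((pderiv i).toLinearMap : Module.End ℝ (MvPolynomial (Fin d) ℝ)) ^ (β i)).prod

/-!
If `Δ_k g = 0` then `g` is `1`-periodic in `x_k`, so along every line in direction `e_k` it is
a one-variable polynomial that takes the same value at all natural numbers, hence is constant.
Thus `g` does not depend on `x_k` and `∂_k g = 0`. Since the `∂_i` commute with each other and
with the `Δ_j`, the factors of `Δ^β` can be peeled off one at a time:
`Δ_k (Δ' g) = 0` gives `∂_k (Δ' g) = Δ' (∂_k g) = 0`, and induction applies to `∂_k g`.
-/

namespace MvPolynomial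

variable {σ R : Type*}

noncomputable def translate [CommSemiring R] (c : σ → R) :
    MvPolynomial σ R →ₐ[R] MvPolynomial σ R :=
  bind₁ fun i => X i + C (c i)

section CommSemiring

variable [CommSemiring R]

@[simp]
theorem translate_X (c : σ → R) (i : σ) : translate c (X i) = X i + C (c i) :=
  bind₁_X_right _ _

theorem eval_translate (c x : σ → R) (p : MvPolynomial σ R) :
    eval x (translate c p) = eval (x + c) p := by
  rw [translate, ← aeval_eq_eval, aeval_bind₁, aeval_eq_eval]
  congr 2
  ext
  simp

theorem pderiv_translate (i : σ) (c : σ → R) (p : MvPolynomial σ R) :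
    pderiv i (translate c p) = translate c (pderiv i p) := by
  induction p using MvPolynomial.induction_on with
  | C a => simp
  | add p q hp hq => simp [hp, hq]
  | mul_X p j hp =>
    rcases eq_or_ne j i with rfl | hji
    · simp only [map_mul, pderiv_mul, hp, translate_X, map_add, pderiv_X_self, pderiv_C, mul_one]
      ring
    · simp [hp, pderiv_X_of_ne hji]

theorem commute_pderiv (i j : σ) :
    Commute ((pderiv i).toLinearMap : Module.End R (MvPolynomial σ R)) (pderiv j).toLinearMap := by
  refine LinearMap.ext fun p => ?_
  change pderiv i (pderiv j p) = pderiv j (pderiv i p)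
  rcases eq_or_ne i j with rfl | hij
  · rfl
  induction p using MvPolynomial.induction_on' with
  | monomial s a =>
    simp only [pderiv_monomial]
    rw [Finsupp.tsub_apply, Finsupp.tsub_apply, Finsupp.single_eq_of_ne' hij,
      Finsupp.single_eq_of_ne' (Ne.symm hij), tsub_zero, tsub_zero,
      tsub_tsub, tsub_tsub, add_comm (Finsupp.single j 1), mul_right_comm]
  | add p q hp hq => simp [hp, hq]

theorem pderiv_bind₁_update_X_zero [DecidableEq σ] (k : σ) (p : MvPolynomial σ R) :
    pderiv k (bind₁ (Function.update X k 0) p) = 0 := by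
  nontriviality R
  refine pderiv_eq_zero_of_notMem_vars fun hk => ?_
  obtain ⟨i, -, hi⟩ := Finset.mem_biUnion.mp (vars_bind₁ _ p hk)
  rcases eq_or_ne i k with rfl | hik
  · simp at hi
  · simp [Function.update_of_ne hik] at hi
    exact hik hi.symm

end CommSemiring

theorem eval_add_nsmul_of_translate_eq [CommSemiring R] {c : σ → R} {p : MvPolynomial σ R}
    (h : translate c p = p) (x : σ → R) (n : ℕ) : eval (x + n • c) p = eval x p := by
  induction n with
  | zero => simp
  | succ n ih => rw [succ_nsmul, ← add_assoc, ← eval_translate, h, ih]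

theorem eval_add_smul_of_translate_eq [CommRing R] [IsDomain R] [CharZero R] {c : σ → R}
    {p : MvPolynomial σ R} (h : translate c p = p) (x : σ → R) (t : R) :
    eval (x + t • c) p = eval x p := by
  set q : Polynomial R := aeval (fun i => Polynomial.C (x i) + Polynomial.X * Polynomial.C (c i)) p
  have hq : ∀ s, q.eval s = eval (x + s • c) p := by
    intro s
    rw [← Polynomial.coe_aeval_eq_eval, ← AlgHom.comp_apply, comp_aeval, ← aeval_eq_eval]
    congr 2
    ext
    simp [mul_comm _ s]
  suffices q = Polynomial.C (eval x p) by rw [← hq, this, Polynomial.eval_C]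
  refine Polynomial.eq_of_infinite_eval_eq _ _ ((Set.infinite_range_of_injective
    Nat.cast_injective).mono ?_)
  rintro - ⟨n, rfl⟩
  simp [hq, ← eval_add_nsmul_of_translate_eq h x n, Nat.cast_smul_eq_nsmul]

theorem pderiv_eq_zero_of_translate_single_eq [CommRing R] [IsDomain R] [CharZero R]
    [DecidableEq σ] {k : σ} {p : MvPolynomial σ R} (h : translate (Pi.single k 1) p = p) :
    pderiv k p = 0 := by
  have hp : bind₁ (Function.update X k 0) p = p := by
    refine funext fun x => ?_
    calc eval x (bind₁ (Function.update X k 0) p)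
        = eval (x + (-x k) • Pi.single k 1) p := by
          rw [← aeval_eq_eval, aeval_bind₁, aeval_eq_eval]
          congr 2
          ext i
          rcases eq_or_ne i k with rfl | hik
          · simp
          · simp [hik]
      _ = eval x p := eval_add_smul_of_translate_eq h x _
  rw [← hp]
  exact pderiv_bind₁_update_X_zero k p

end MvPolynomial

theorem Module.End.list_prod_map_apply_eq_zero_of_commute {R M ι : Type*} [Semiring R]
    [AddCommMonoid M] [Module R M] {A B : ι → Module.End R M}
    (hBA : ∀ i j, Commute (B i) (A j)) (hBB : ∀ i j, Commute (B i) (B j))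
    (hAB : ∀ i x, A i x = 0 → B i x = 0) (l : List ι) (x : M)
    (h : (l.map A).prod x = 0) : (l.map B).prod x = 0 := by
  induction l generalizing x with
  | nil => simpa using h
  | cons i l ih =>
    rw [List.map_cons, List.prod_cons, Module.End.mul_apply] at h
    have hcomm {C : ι → Module.End R M} (hC : ∀ j, Commute (B i) (C j)) :
        Commute (B i) (l.map C).prod :=
      Commute.list_prod_right _ _ fun _ hc => by
        obtain ⟨j, -, rfl⟩ := List.mem_map.mp hc
        exact hC j
    have hBi : (l.map A).prod (B i x) = 0 := by
      rw [← Module.End.mul_apply, ← (hcomm (hBA i)).eq, Module.End.mul_apply, hAB i _ h]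
    rw [List.map_cons, List.prod_cons, (hcomm (hBB i)).eq, Module.End.mul_apply, ih _ hBi]

theorem List.prod_ofFn_pow_eq_prod_map_flatten {M : Type*} [Monoid M] {n : ℕ} (f : Fin n → M)
    (β : Fin n → ℕ) :
    (List.ofFn fun k => f k ^ β k).prod =
      ((List.ofFn fun k => List.replicate (β k) k).flatten.map f).prod := by
  simp [List.map_flatten, List.prod_flatten, List.map_ofFn, Function.comp_def, List.prod_replicate]

theorem fdiff_eq_translate_sub_one {d : ℕ} (k : Fin d) :
    fdiff k = (translate (Pi.single k 1)).toLinearMap - 1 :=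
  rfl

theorem commute_pderiv_fdiff {d : ℕ} (i k : Fin d) :
    Commute ((pderiv i).toLinearMap : Module.End ℝ (MvPolynomial (Fin d) ℝ)) (fdiff k) := by
  rw [fdiff_eq_translate_sub_one]
  have hτ : Commute ((pderiv i).toLinearMap : Module.End ℝ (MvPolynomial (Fin d) ℝ))
      (translate (Pi.single k 1)).toLinearMap :=
    LinearMap.ext (pderiv_translate i _)
  exact hτ.sub_right (Commute.one_right _)

theorem pderiv_eq_zero_of_fdiff_eq_zero {d : ℕ} {k : Fin d} {g : MvPolynomial (Fin d) ℝ}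
    (h : fdiff k g = 0) : pderiv k g = 0 :=
  pderiv_eq_zero_of_translate_single_eq (sub_eq_zero.mp h)

theorem stmt_11 (d : ℕ) (g : MvPolynomial (Fin d) ℝ) (β : Fin d → ℕ)
    (h : iterFDiff β g = 0) : iterPDeriv β g = 0 := by
  rw [iterFDiff, List.prod_ofFn_pow_eq_prod_map_flatten] at h
  rw [iterPDeriv, List.prod_ofFn_pow_eq_prod_map_flatten]
  exact Module.End.list_prod_map_apply_eq_zero_of_commute (A := fdiff)
    (B := fun i => (pderiv i).toLinearMap) commute_pderiv_fdiff commute_pderiv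
    (fun _ _ hk => pderiv_eq_zero_of_fdiff_eq_zero hk) _ g h
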